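/- arXiv:1312.7732 — 4 statements merged into one kernel-verified Lean document; each statement's English description precedes it below -/
import Mathlib

section
/- For λ > 2 and a ∈ (0, 1/2), the maximum over d ∈ [2a, 1] of F(λ)(1 - 2a/d) - (2a/d) q(d) is attained at d = d_λ := 1 - 2/λ whenever d_λ ≥ 2a (equivalently λ ≥ 2/(1-2a)), and its value equals F(λ) - a log((1+d_λ)/(1-d_λ)). -/
noncomputable def entq (d : ℝ) : ℝ :=
  (1 / 2) * ((1 + d) * Real.log (1 + d) + (1 - d) * Real.log (1 - d))

noncomputable def freeEn (l : ℝ) : ℝ := Real.log (l / (2 * Real.sqrt (l - 1)))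

lemma continuous_entq : Continuous entq := by
  have h1 : Continuous fun d : ℝ => (1 + d) * Real.log (1 + d) :=
    Real.continuous_mul_log.comp (continuous_const.add continuous_id)
  have h2 : Continuous fun d : ℝ => (1 - d) * Real.log (1 - d) :=
    Real.continuous_mul_log.comp (continuous_const.sub continuous_id)
  exact continuous_const.mul (h1.add h2)

lemma entq_hasDerivAt {d : ℝ} (h1 : -1 < d) (h2 : d < 1) :
    HasDerivAt entq ((1 / 2) * (Real.log (1 + d) - Real.log (1 - d))) d := by
  have hp : (0:ℝ) < 1 + d := by linarith
  have hm : (0:ℝ) < 1 - d := by linarith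
  have d1 : HasDerivAt (fun x : ℝ => 1 + x) 1 d := by
    simpa using (hasDerivAt_id d).const_add (1:ℝ)
  have d2 : HasDerivAt (fun x : ℝ => 1 - x) (-1) d := by
    simpa using (hasDerivAt_id d).const_sub (1:ℝ)
  have l1 := d1.log hp.ne'
  have l2 := d2.log hm.ne'
  have p1 := d1.mul l1
  have p2 := d2.mul l2
  have := (p1.add p2).const_mul (1/2 : ℝ)
  convert this using 1
  · rfl
  · rfl
  · rfl
  field_simp
  ring

/-- For `λ > 2`, `a ∈ (0,1/2)`, if `d_λ := 1 - 2/λ ≥ 2a` (i.e. `λ ≥ 2/(1-2a)`),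
then the maximum over `d ∈ [2a,1]` of `F(λ)(1 - 2a/d) - (2a/d)q(d)` is attained at
`d = d_λ`, and its value is `F(λ) - a log((1+d_λ)/(1-d_λ))`. -/
theorem max_at_d_lambda (a lam : ℝ) (ha : a ∈ Set.Ioo (0 : ℝ) (1 / 2))
    (hlam : 2 < lam) (hd : 2 * a ≤ 1 - 2 / lam) :
    IsMaxOn (fun d => freeEn lam * (1 - 2 * a / d) - (2 * a / d) * entq d)
        (Set.Icc (2 * a) 1) (1 - 2 / lam) ∧
      freeEn lam * (1 - 2 * a / (1 - 2 / lam)) - (2 * a / (1 - 2 / lam)) * entq (1 - 2 / lam)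
        = freeEn lam - a * Real.log ((1 + (1 - 2 / lam)) / (1 - (1 - 2 / lam))) := by
  obtain ⟨ha0, ha2⟩ := ha
  have hlam0 : (0:ℝ) < lam := by linarith
  set dl : ℝ := 1 - 2 / lam with hdl
  have ha' : (0:ℝ) < 2 * a := by linarith
  have hdlpos : 0 < dl := lt_of_lt_of_le ha' hd
  have hdl1 : dl < 1 := by
    have : (0:ℝ) < 2 / lam := by positivity
    rw [hdl]; linarith
  set F : ℝ := freeEn lam with hF
  have hsq : 1 - dl ^ 2 = 4 * (lam - 1) / lam ^ 2 := by
    rw [hdl]; field_simp; ring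
  have h1lam : (0:ℝ) < lam - 1 := by linarith
  have hF2 : F = -(1 / 2) * Real.log (1 - dl ^ 2) := by
    rw [hsq, hF]
    unfold freeEn
    have hs : (0:ℝ) < Real.sqrt (lam - 1) := Real.sqrt_pos.mpr h1lam
    rw [Real.log_div hlam0.ne' (by positivity),
      Real.log_mul two_ne_zero hs.ne', Real.log_sqrt h1lam.le,
      Real.log_div (by positivity) (by positivity),
      Real.log_mul (by norm_num) h1lam.ne',
      show (4:ℝ) = 2 ^ 2 by norm_num, show lam ^ 2 = lam ^ (2:ℕ) by norm_num,
      Real.log_pow, Real.log_pow]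
    push_cast
    ring
  set h : ℝ → ℝ := fun d => (F + entq d) / d with hh
  have hderiv : ∀ x : ℝ, 0 < x → x < 1 →
      HasDerivAt h ((1 / 2) * (Real.log (1 - dl ^ 2) - Real.log (1 - x ^ 2)) / x ^ 2) x := by
    intro x hx0 hx1
    have hq := entq_hasDerivAt (by linarith : (-1:ℝ) < x) hx1
    have h1 : HasDerivAt (fun d => F + entq d)
        ((1 / 2) * (Real.log (1 + x) - Real.log (1 - x))) x := hq.const_add F
    have h2 : HasDerivAt h
        (((1 / 2) * (Real.log (1 + x) - Real.log (1 - x)) * x - (F + entq x) * 1) / x ^ 2) x :=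
      h1.div (hasDerivAt_id x) hx0.ne'
    convert h2 using 1
    have hxp : (0:ℝ) < 1 + x := by linarith
    have hxm : (0:ℝ) < 1 - x := by linarith
    have hlogsq : Real.log (1 - x ^ 2) = Real.log (1 + x) + Real.log (1 - x) := by
      rw [show (1 - x ^ 2) = (1 + x) * (1 - x) by ring, Real.log_mul hxp.ne' hxm.ne']
    rw [hlogsq, hF2]
    unfold entq
    field_simp
    ring
  have hcont : ∀ c : ℝ, 0 < c → ContinuousOn h (Set.Icc c 1) := by
    intro c hc
    apply ContinuousOn.div ((continuous_const.add continuous_entq).continuousOn) continuousOn_id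
    intro x hx
    exact (lt_of_lt_of_le hc hx.1).ne'
  have hanti : AntitoneOn h (Set.Icc (2 * a) dl) := by
    apply StrictAntiOn.antitoneOn
    apply strictAntiOn_of_deriv_neg (convex_Icc _ _)
      ((hcont (2 * a) ha').mono (Set.Icc_subset_Icc_right hdl1.le))
    intro x hx
    rw [interior_Icc] at hx
    have hx0 : 0 < x := lt_trans ha' hx.1
    have hx1 : x < 1 := lt_trans hx.2 hdl1
    rw [(hderiv x hx0 hx1).deriv]
    apply div_neg_of_neg_of_pos _ (by positivity)
    have hlt : Real.log (1 - dl ^ 2) < Real.log (1 - x ^ 2) :=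
      Real.log_lt_log (by nlinarith) (by nlinarith [hx.2])
    linarith
  have hmono : MonotoneOn h (Set.Icc dl 1) := by
    apply StrictMonoOn.monotoneOn
    apply strictMonoOn_of_deriv_pos (convex_Icc _ _) (hcont dl hdlpos)
    intro x hx
    rw [interior_Icc] at hx
    have hx0 : 0 < x := lt_trans hdlpos hx.1
    rw [(hderiv x hx0 hx.2).deriv]
    apply div_pos _ (by positivity)
    have hlt : Real.log (1 - x ^ 2) < Real.log (1 - dl ^ 2) :=
      Real.log_lt_log (by nlinarith [hx.2]) (by nlinarith [hx.1])
    linarith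
  have hp : (0:ℝ) < 1 + dl := by linarith
  have hm : (0:ℝ) < 1 - dl := by linarith
  constructor
  · intro d hd'
    simp only [Set.mem_Icc] at hd'
    have key : h dl ≤ h d := by
      rcases le_total d dl with hc | hc
      · exact hanti ⟨hd'.1, hc⟩ ⟨hd, le_refl dl⟩ hc
      · exact hmono ⟨le_refl dl, hdl1.le⟩ ⟨hc, hd'.2⟩ hc
    show F * (1 - 2 * a / d) - (2 * a / d) * entq d ≤
      F * (1 - 2 * a / dl) - (2 * a / dl) * entq dl
    have e1 : ∀ x : ℝ, F * (1 - 2 * a / x) - (2 * a / x) * entq x = F - 2 * a * h x := by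
      intro x
      simp only [hh]
      ring
    rw [e1, e1]
    nlinarith [key]
  · have hlogsq : Real.log (1 - dl ^ 2) = Real.log (1 + dl) + Real.log (1 - dl) := by
      rw [show (1 - dl ^ 2) = (1 + dl) * (1 - dl) by ring, Real.log_mul hp.ne' hm.ne']
    rw [Real.log_div hp.ne' hm.ne', hF2, hlogsq]
    unfold entq
    field_simp
    ring
end

section
/- For x ∈ (a, 1-a) with a ∈ (0,1/2), the function h(x) := x·q(a/x) + (1-x)·q(a/(1-x)) is minimized at x = 1/2, and its minimum value is q(2a). Equivalently, max_{x∈[a,1-a]} [ -x q(a/x) - (1-x) q(a/(1-x)) ] = -q(2a). -/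
/-- Two-term log-sum inequality. -/
lemma logsum (a1 a2 b1 b2 : ℝ) (ha1 : 0 ≤ a1) (ha2 : 0 ≤ a2)
    (hb1 : 0 < b1) (hb2 : 0 < b2) :
    (a1 + a2) * Real.log ((a1 + a2) / (b1 + b2)) ≤
      a1 * Real.log (a1 / b1) + a2 * Real.log (a2 / b2) := by
  have hb : 0 < b1 + b2 := by linarith
  have m1 : a1 / b1 ∈ Set.Ici (0 : ℝ) := Set.mem_Ici.mpr (by positivity)
  have m2 : a2 / b2 ∈ Set.Ici (0 : ℝ) := Set.mem_Ici.mpr (by positivity)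
  have w1 : (0 : ℝ) ≤ b1 / (b1 + b2) := by positivity
  have w2 : (0 : ℝ) ≤ b2 / (b1 + b2) := by positivity
  have hab : b1 / (b1 + b2) + b2 / (b1 + b2) = 1 := by field_simp
  have h := Real.convexOn_mul_log.2 m1 m2 w1 w2 hab
  simp only [smul_eq_mul] at h
  have e1 : b1 / (b1 + b2) * (a1 / b1) + b2 / (b1 + b2) * (a2 / b2)
      = (a1 + a2) / (b1 + b2) := by field_simp
  rw [e1] at h
  have h2 := mul_le_mul_of_nonneg_left h hb.le
  calc (a1 + a2) * Real.log ((a1 + a2) / (b1 + b2))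
      = (b1 + b2) * ((a1 + a2) / (b1 + b2) * Real.log ((a1 + a2) / (b1 + b2))) := by
        field_simp
    _ ≤ (b1 + b2) * (b1 / (b1 + b2) * (a1 / b1 * Real.log (a1 / b1)) +
          b2 / (b1 + b2) * (a2 / b2 * Real.log (a2 / b2))) := h2
    _ = a1 * Real.log (a1 / b1) + a2 * Real.log (a2 / b2) := by
        field_simp

lemma entq_expand (a x : ℝ) (hx : 0 < x) :
    x * entq (a / x) =
      (1 / 2) * ((x + a) * Real.log ((x + a) / x) + (x - a) * Real.log ((x - a) / x)) := by
  have h1 : 1 + a / x = (x + a) / x := by field_simp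
  have h2 : 1 - a / x = (x - a) / x := by field_simp
  rw [entq, h1, h2]
  field_simp

/-- For `a ∈ (0,1/2)`, the function `h(x) = x q(a/x) + (1-x) q(a/(1-x))` on `[a,1-a]`
is minimized at `x = 1/2` with minimum value `q(2a)`; equivalently
`max_{x ∈ [a,1-a]} [-x q(a/x) - (1-x) q(a/(1-x))] = -q(2a)`. -/
theorem entropy_min_at_half (a : ℝ) (ha : a ∈ Set.Ioo (0 : ℝ) (1 / 2)) :
    (∀ x ∈ Set.Icc a (1 - a),
        entq (2 * a) ≤ x * entq (a / x) + (1 - x) * entq (a / (1 - x))) ∧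
      (1 / 2 : ℝ) * entq (a / (1 / 2 : ℝ)) + (1 - 1 / 2 : ℝ) * entq (a / (1 - 1 / 2 : ℝ))
        = entq (2 * a) := by
  obtain ⟨ha0, ha2⟩ := ha
  constructor
  · intro x hx
    obtain ⟨hx1, hx2⟩ := hx
    have hxpos : 0 < x := lt_of_lt_of_le ha0 hx1
    have hx1pos : 0 < 1 - x := by linarith
    rw [entq_expand a x hxpos, entq_expand a (1 - x) hx1pos]
    have hA := logsum (x + a) (1 - x + a) x (1 - x) (by linarith) (by linarith) hxpos hx1pos
    have hB := logsum (x - a) (1 - x - a) x (1 - x) (by linarith) (by linarith) hxpos hx1pos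
    have eA : x + a + (1 - x + a) = 1 + 2 * a := by ring
    have eB : x - a + (1 - x - a) = 1 - 2 * a := by ring
    have eD : x + (1 - x) = (1 : ℝ) := by ring
    rw [eA, eD, div_one] at hA
    rw [eB, eD, div_one] at hB
    rw [entq]
    linarith
  · have h1 : a / (1 / 2 : ℝ) = 2 * a := by ring
    have h2 : a / (1 - 1 / 2 : ℝ) = 2 * a := by norm_num; ring
    rw [h1, h2]; ring
end

section
/- Let p be a probability measure on {0,...,L} and q(·,·) transition rates of a p-reversible nearest-neighbor Markov chain on {0,...,L}. Suppose (a) min_{1≤n≤L} max(q(n,n-1), q(n-1,n)) ≥ α > 0, and (b) for every n, min(Σ_{m≤n} p(m), Σ_{m≥n} p(m)) ≤ β p(n). Then the relaxation time (inverse spectral gap) of the chain is at most βL/α. -/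
open Finset

private lemma bd_telescope (f : ℕ → ℝ) :
    ∀ y x : ℕ, x ≤ y → ∑ n ∈ Finset.Ioc x y, (f n - f (n - 1)) = f y - f x := by
  intro y
  induction y with
  | zero => intro x hx; interval_cases x; simp
  | succ y ih =>
    intro x hx
    rcases Nat.lt_or_ge x (y + 1) with h | h
    · have hxy : x ≤ y := Nat.lt_succ_iff.mp h
      rw [Finset.sum_Ioc_succ_top hxy, ih x hxy]
      simp only [Nat.add_sub_cancel]
      ring
    · have hx' : x = y + 1 := le_antisymm hx h
      subst hx'; simp

/-- Sinclair's flux bound for a one-dimensional (birth-death) chain on `{0,…,L}`,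
reversible w.r.t. `p`, with up-rates `qup n = q(n,n+1)` and down-rates `qdn n = q(n,n-1)`.
If (a) `max(q(n,n-1), q(n-1,n)) ≥ α` for all `1 ≤ n ≤ L` and
(b) `min(Σ_{m≤n} p(m), Σ_{m≥n} p(m)) ≤ β p(n)` for all `n ≤ L`,
then the relaxation time is at most `βL/α`, i.e. `Var_p(f) ≤ (βL/α) E(f)` for all `f`. -/
theorem birth_death_relaxation_time (L : ℕ) (hL : 1 ≤ L) (p qup qdn : ℕ → ℝ)
    (α β : ℝ) (hα : 0 < α)
    (hp : ∀ n, 0 ≤ p n) (hpsum : ∑ n ∈ Finset.range (L + 1), p n = 1)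
    (hqup : ∀ n, 0 ≤ qup n) (hqdn : ∀ n, 0 ≤ qdn n)
    (hrev : ∀ n < L, p n * qup n = p (n + 1) * qdn (n + 1))
    (ha : ∀ n, 1 ≤ n → n ≤ L → α ≤ max (qdn n) (qup (n - 1)))
    (hb : ∀ n ≤ L,
      min (∑ m ∈ Finset.range (n + 1), p m) (∑ m ∈ Finset.Icc n L, p m) ≤ β * p n) :
    ∀ f : ℕ → ℝ,
      (∑ n ∈ Finset.range (L + 1),
          p n * (f n - ∑ m ∈ Finset.range (L + 1), p m * f m) ^ 2)
        ≤ (β * L / α) *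
          ∑ n ∈ Finset.Icc 1 L, p n * qdn n * (f n - f (n - 1)) ^ 2 := by
  intro f
  set S := Finset.range (L + 1) with hS
  set T := Finset.Icc 1 L with hT
  set μ := ∑ m ∈ S, p m * f m with hμ
  set A := ∑ n ∈ S, p n * f n ^ 2 with hA
  have hpsum' : ∑ n ∈ S, p n = 1 := hpsum
  set P1 : ℕ → ℝ := fun n => ∑ x ∈ Finset.range n, p x with hP1
  set P2 : ℕ → ℝ := fun n => ∑ y ∈ Finset.Icc n L, p y with hP2
  set I : ℕ → ℕ → ℕ → ℝ := fun n x y =>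
    if x < n ∧ n ≤ y then (f n - f (n - 1)) ^ 2 else 0 with hI
  have hI0 : ∀ n x y, 0 ≤ I n x y := by
    intro n x y; rw [hI]; dsimp only
    split
    · exact sq_nonneg _
    · exact le_rfl
  -- variance identity
  have hVar : ∑ n ∈ S, p n * (f n - μ) ^ 2 = A - μ ^ 2 := by
    calc ∑ n ∈ S, p n * (f n - μ) ^ 2
        = ∑ n ∈ S, (p n * f n ^ 2 - (2 * μ) * (p n * f n) + μ ^ 2 * p n) := by
          exact Finset.sum_congr rfl fun n _ => by ring
      _ = A - (2 * μ) * (∑ n ∈ S, p n * f n) + μ ^ 2 * (∑ n ∈ S, p n) := by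
          rw [Finset.sum_add_distrib, Finset.sum_sub_distrib, ← Finset.mul_sum,
            ← Finset.mul_sum, ← hA]
      _ = A - μ ^ 2 := by rw [← hμ, hpsum']; ring
  have hinner : ∀ x, ∑ y ∈ S, p x * p y * (f y - f x) ^ 2
      = A * p x - (2 * μ) * (p x * f x) + p x * f x ^ 2 := by
    intro x
    calc ∑ y ∈ S, p x * p y * (f y - f x) ^ 2
        = ∑ y ∈ S, (p x * (p y * f y ^ 2) - (2 * (p x * f x)) * (p y * f y)
            + (p x * f x ^ 2) * p y) := Finset.sum_congr rfl fun y _ => by ring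
      _ = p x * A - (2 * (p x * f x)) * μ + (p x * f x ^ 2) * (∑ y ∈ S, p y) := by
          rw [Finset.sum_add_distrib, Finset.sum_sub_distrib, ← Finset.mul_sum,
            ← Finset.mul_sum, ← Finset.mul_sum, ← hA, ← hμ]
      _ = A * p x - (2 * μ) * (p x * f x) + p x * f x ^ 2 := by rw [hpsum']; ring
  have hDouble : ∑ x ∈ S, ∑ y ∈ S, p x * p y * (f y - f x) ^ 2 = 2 * A - 2 * μ ^ 2 := by
    calc ∑ x ∈ S, ∑ y ∈ S, p x * p y * (f y - f x) ^ 2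
        = ∑ x ∈ S, (A * p x - (2 * μ) * (p x * f x) + p x * f x ^ 2) :=
          Finset.sum_congr rfl fun x _ => hinner x
      _ = A * (∑ x ∈ S, p x) - (2 * μ) * (∑ x ∈ S, p x * f x) + A := by
          rw [Finset.sum_add_distrib, Finset.sum_sub_distrib, ← Finset.mul_sum,
            ← Finset.mul_sum, ← hA]
      _ = 2 * A - 2 * μ ^ 2 := by rw [hpsum', ← hμ]; ring
  -- path bound
  have hkey : ∀ x y : ℕ, x ≤ y → y ≤ L →
      (f y - f x) ^ 2 ≤ (L : ℝ) * ∑ n ∈ T, I n x y := by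
    intro x y hxy hyL
    have htel : f y - f x = ∑ n ∈ Finset.Ioc x y, (f n - f (n - 1)) :=
      (bd_telescope f y x hxy).symm
    have hsub : Finset.Ioc x y ⊆ T := by
      intro n hn; rw [hT]; rw [Finset.mem_Ioc] at hn; rw [Finset.mem_Icc]; omega
    have hIsum : ∑ n ∈ T, I n x y = ∑ n ∈ Finset.Ioc x y, (f n - f (n - 1)) ^ 2 := by
      calc ∑ n ∈ T, I n x y
          = ∑ n ∈ T, (if n ∈ Finset.Ioc x y then (f n - f (n - 1)) ^ 2 else 0) := by
            refine Finset.sum_congr rfl fun n _ => ?_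
            simp only [hI, Finset.mem_Ioc]
        _ = ∑ n ∈ T ∩ Finset.Ioc x y, (f n - f (n - 1)) ^ 2 := Finset.sum_ite_mem _ _ _
        _ = ∑ n ∈ Finset.Ioc x y, (f n - f (n - 1)) ^ 2 := by
            rw [Finset.inter_eq_right.mpr hsub]
    have hcs : (f y - f x) ^ 2
        ≤ ((Finset.Ioc x y).card : ℝ) * ∑ n ∈ Finset.Ioc x y, (f n - f (n - 1)) ^ 2 := by
      rw [htel]
      exact sq_sum_le_card_mul_sum_sq
    have hcard : ((Finset.Ioc x y).card : ℝ) ≤ (L : ℝ) := by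
      rw [Nat.card_Ioc]; exact_mod_cast (by omega : y - x ≤ L)
    refine hcs.trans ?_
    rw [hIsum]
    exact mul_le_mul_of_nonneg_right hcard (Finset.sum_nonneg fun n _ => sq_nonneg _)
  have hkey2 : ∀ x ∈ S, ∀ y ∈ S,
      (f y - f x) ^ 2 ≤ (L : ℝ) * ∑ n ∈ T, (I n x y + I n y x) := by
    intro x hx y hy
    have hxL : x ≤ L := by rw [hS, Finset.mem_range] at hx; omega
    have hyL : y ≤ L := by rw [hS, Finset.mem_range] at hy; omega
    have hL0 : (0 : ℝ) ≤ (L : ℝ) := Nat.cast_nonneg _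
    rcases le_total x y with h | h
    · refine (hkey x y h hyL).trans ?_
      refine mul_le_mul_of_nonneg_left ?_ hL0
      exact Finset.sum_le_sum fun n _ => le_add_of_nonneg_right (hI0 n y x)
    · have : (f y - f x) ^ 2 = (f x - f y) ^ 2 := by ring
      rw [this]
      refine (hkey y x h hxL).trans ?_
      refine mul_le_mul_of_nonneg_left ?_ hL0
      exact Finset.sum_le_sum fun n _ => le_add_of_nonneg_left (hI0 n x y)
  -- product/flux identity
  have hprod : ∀ n ∈ T, ∑ x ∈ S, ∑ y ∈ S, p x * p y * I n x y
      = P1 n * P2 n * (f n - f (n - 1)) ^ 2 := by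
    intro n hn
    rw [hT, Finset.mem_Icc] at hn
    have hsplit : ∀ x y, p x * p y * I n x y
        = (if x < n then p x else 0) * ((if n ≤ y then p y else 0) * (f n - f (n - 1)) ^ 2) := by
      intro x y
      by_cases h1 : x < n <;> by_cases h2 : n ≤ y <;> rw [hI] <;> simp [h1, h2] <;> ring
    have hfac : ∑ x ∈ S, ∑ y ∈ S, p x * p y * I n x y
        = (∑ x ∈ S, (if x < n then p x else 0))
          * ((∑ y ∈ S, (if n ≤ y then p y else 0)) * (f n - f (n - 1)) ^ 2) := by
      calc ∑ x ∈ S, ∑ y ∈ S, p x * p y * I n x y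
          = ∑ x ∈ S, ∑ y ∈ S, (if x < n then p x else 0)
              * ((if n ≤ y then p y else 0) * (f n - f (n - 1)) ^ 2) :=
            Finset.sum_congr rfl fun x _ => Finset.sum_congr rfl fun y _ => hsplit x y
        _ = (∑ x ∈ S, (if x < n then p x else 0))
              * ((∑ y ∈ S, (if n ≤ y then p y else 0)) * (f n - f (n - 1)) ^ 2) := by
            rw [Finset.sum_mul]
            exact Finset.sum_congr rfl fun x _ => by rw [Finset.sum_mul, Finset.mul_sum]
    have h1 : ∑ x ∈ S, (if x < n then p x else 0) = P1 n := by
      calc ∑ x ∈ S, (if x < n then p x else 0)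
          = ∑ x ∈ S, (if x ∈ Finset.range n then p x else 0) := by
            exact Finset.sum_congr rfl fun x _ => by simp only [Finset.mem_range]
        _ = ∑ x ∈ S ∩ Finset.range n, p x := Finset.sum_ite_mem _ _ _
        _ = P1 n := by
            rw [Finset.inter_eq_right.mpr (by rw [hS]; exact Finset.range_subset_range.mpr (by omega))]
    have h2 : ∑ y ∈ S, (if n ≤ y then p y else 0) = P2 n := by
      calc ∑ y ∈ S, (if n ≤ y then p y else 0)
          = ∑ y ∈ S, (if y ∈ Finset.Icc n L then p y else 0) := by
            refine Finset.sum_congr rfl fun y hy => ?_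
            have hyL : y ≤ L := by rw [hS, Finset.mem_range] at hy; omega
            simp only [Finset.mem_Icc]
            by_cases h : n ≤ y <;> simp [h, hyL]
        _ = ∑ y ∈ S ∩ Finset.Icc n L, p y := Finset.sum_ite_mem _ _ _
        _ = P2 n := by
            rw [Finset.inter_eq_right.mpr (by
              intro m hm; rw [Finset.mem_Icc] at hm; rw [hS, Finset.mem_range]; omega)]
    rw [hfac, h1, h2]; ring
  -- the swap
  have hswap : ∑ x ∈ S, ∑ y ∈ S, p x * p y * ((L : ℝ) * ∑ n ∈ T, (I n x y + I n y x))
      = 2 * (L : ℝ) * ∑ n ∈ T, P1 n * P2 n * (f n - f (n - 1)) ^ 2 := by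
    have hprod' : ∀ n ∈ T, ∑ x ∈ S, ∑ y ∈ S, p x * p y * I n y x
        = P1 n * P2 n * (f n - f (n - 1)) ^ 2 := by
      intro n hn
      rw [Finset.sum_comm]
      calc ∑ y ∈ S, ∑ x ∈ S, p x * p y * I n y x
          = ∑ y ∈ S, ∑ x ∈ S, p y * p x * I n y x := by
            exact Finset.sum_congr rfl fun y _ => Finset.sum_congr rfl fun x _ => by ring
        _ = P1 n * P2 n * (f n - f (n - 1)) ^ 2 := hprod n hn
    calc ∑ x ∈ S, ∑ y ∈ S, p x * p y * ((L : ℝ) * ∑ n ∈ T, (I n x y + I n y x))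
        = ∑ x ∈ S, ∑ y ∈ S, ∑ n ∈ T,
            ((L : ℝ) * (p x * p y * I n x y) + (L : ℝ) * (p x * p y * I n y x)) := by
          refine Finset.sum_congr rfl fun x _ => Finset.sum_congr rfl fun y _ => ?_
          rw [Finset.mul_sum, Finset.mul_sum]
          exact Finset.sum_congr rfl fun n _ => by ring
      _ = ∑ n ∈ T, ∑ x ∈ S, ∑ y ∈ S,
            ((L : ℝ) * (p x * p y * I n x y) + (L : ℝ) * (p x * p y * I n y x)) := by
          rw [show (∑ x ∈ S, ∑ y ∈ S, ∑ n ∈ T,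
              ((L : ℝ) * (p x * p y * I n x y) + (L : ℝ) * (p x * p y * I n y x)))
            = ∑ x ∈ S, ∑ n ∈ T, ∑ y ∈ S,
              ((L : ℝ) * (p x * p y * I n x y) + (L : ℝ) * (p x * p y * I n y x))
            from Finset.sum_congr rfl fun x _ => Finset.sum_comm]
          exact Finset.sum_comm
      _ = ∑ n ∈ T, ((L : ℝ) * (∑ x ∈ S, ∑ y ∈ S, p x * p y * I n x y)
            + (L : ℝ) * (∑ x ∈ S, ∑ y ∈ S, p x * p y * I n y x)) := by
          refine Finset.sum_congr rfl fun n _ => ?_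
          simp only [Finset.sum_add_distrib, ← Finset.mul_sum]
      _ = ∑ n ∈ T, 2 * (L : ℝ) * (P1 n * P2 n * (f n - f (n - 1)) ^ 2) := by
          refine Finset.sum_congr rfl fun n hn => ?_
          rw [hprod n hn, hprod' n hn]; ring
      _ = 2 * (L : ℝ) * ∑ n ∈ T, P1 n * P2 n * (f n - f (n - 1)) ^ 2 := by
          rw [Finset.mul_sum]
  -- edge (flux) bound
  have hP1nonneg : ∀ n, 0 ≤ P1 n := fun n => Finset.sum_nonneg fun i _ => hp i
  have hP2nonneg : ∀ n, 0 ≤ P2 n := fun n => Finset.sum_nonneg fun i _ => hp i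
  have hP1le1 : ∀ n, n ≤ L + 1 → P1 n ≤ 1 := by
    intro n hn
    rw [← hpsum', hP1]
    exact Finset.sum_le_sum_of_subset_of_nonneg
      (by rw [hS]; exact Finset.range_subset_range.mpr hn) (fun i _ _ => hp i)
  have hP2le1 : ∀ n, P2 n ≤ 1 := by
    intro n
    rw [← hpsum', hP2]
    refine Finset.sum_le_sum_of_subset_of_nonneg ?_ (fun i _ _ => hp i)
    intro m hm; rw [Finset.mem_Icc] at hm; rw [hS, Finset.mem_range]; omega
  have hedge : ∀ n ∈ T, P1 n * P2 n ≤ β / α * (p n * qdn n) := by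
    intro n hn
    rw [hT, Finset.mem_Icc] at hn
    obtain ⟨h1, h2⟩ := hn
    rcases le_max_iff.mp (ha n h1 h2) with hc | hc
    · -- α ≤ qdn n
      have hmin := hb n h2
      have e1 : P1 n * P2 n ≤ ∑ m ∈ Finset.range (n + 1), p m := by
        calc P1 n * P2 n ≤ P1 n * 1 := mul_le_mul_of_nonneg_left (hP2le1 n) (hP1nonneg n)
          _ = P1 n := mul_one _
          _ ≤ ∑ m ∈ Finset.range (n + 1), p m := by
              rw [hP1]
              exact Finset.sum_le_sum_of_subset_of_nonneg
                (Finset.range_subset_range.mpr (Nat.le_succ n)) (fun i _ _ => hp i)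
      have e2 : P1 n * P2 n ≤ ∑ m ∈ Finset.Icc n L, p m := by
        calc P1 n * P2 n ≤ 1 * P2 n :=
              mul_le_mul_of_nonneg_right (hP1le1 n (by omega)) (hP2nonneg n)
          _ = P2 n := one_mul _
      have e3 : P1 n * P2 n ≤ β * p n := le_trans (le_min e1 e2) hmin
      have hb0 : 0 ≤ β * p n :=
        le_trans (le_min (Finset.sum_nonneg fun i _ => hp i)
          (Finset.sum_nonneg fun i _ => hp i)) hmin
      refine e3.trans ?_
      have hq1 : (1 : ℝ) ≤ qdn n / α := (one_le_div hα).mpr hc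
      calc β * p n = (β * p n) * 1 := (mul_one _).symm
        _ ≤ (β * p n) * (qdn n / α) := mul_le_mul_of_nonneg_left hq1 hb0
        _ = β / α * (p n * qdn n) := by ring
    · -- α ≤ qup (n-1)
      have hrev' : p (n - 1) * qup (n - 1) = p n * qdn n := by
        have h := hrev (n - 1) (by omega)
        rwa [Nat.sub_add_cancel h1] at h
      have hmin := hb (n - 1) (by omega)
      rw [Nat.sub_add_cancel h1] at hmin
      have e1 : P1 n * P2 n ≤ ∑ m ∈ Finset.range n, p m := by
        calc P1 n * P2 n ≤ P1 n * 1 := mul_le_mul_of_nonneg_left (hP2le1 n) (hP1nonneg n)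
          _ = P1 n := mul_one _
      have e2 : P1 n * P2 n ≤ ∑ m ∈ Finset.Icc (n - 1) L, p m := by
        calc P1 n * P2 n ≤ 1 * P2 n :=
              mul_le_mul_of_nonneg_right (hP1le1 n (by omega)) (hP2nonneg n)
          _ = P2 n := one_mul _
          _ ≤ ∑ m ∈ Finset.Icc (n - 1) L, p m := by
              rw [hP2]
              exact Finset.sum_le_sum_of_subset_of_nonneg
                (Finset.Icc_subset_Icc (by omega) le_rfl) (fun i _ _ => hp i)
      have e3 : P1 n * P2 n ≤ β * p (n - 1) := le_trans (le_min e1 e2) hmin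
      have hb0 : 0 ≤ β * p (n - 1) :=
        le_trans (le_min (Finset.sum_nonneg fun i _ => hp i)
          (Finset.sum_nonneg fun i _ => hp i)) hmin
      refine e3.trans ?_
      have hq1 : (1 : ℝ) ≤ qup (n - 1) / α := (one_le_div hα).mpr hc
      calc β * p (n - 1) = (β * p (n - 1)) * 1 := (mul_one _).symm
        _ ≤ (β * p (n - 1)) * (qup (n - 1) / α) := mul_le_mul_of_nonneg_left hq1 hb0
        _ = β / α * (p (n - 1) * qup (n - 1)) := by ring
        _ = β / α * (p n * qdn n) := by rw [hrev']
  -- assemble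
  have step2 : ∑ x ∈ S, ∑ y ∈ S, p x * p y * (f y - f x) ^ 2
      ≤ ∑ x ∈ S, ∑ y ∈ S, p x * p y * ((L : ℝ) * ∑ n ∈ T, (I n x y + I n y x)) := by
    refine Finset.sum_le_sum fun x hx => Finset.sum_le_sum fun y hy => ?_
    exact mul_le_mul_of_nonneg_left (hkey2 x hx y hy) (mul_nonneg (hp x) (hp y))
  have main1 : ∑ n ∈ S, p n * (f n - μ) ^ 2
      ≤ (L : ℝ) * ∑ n ∈ T, P1 n * P2 n * (f n - f (n - 1)) ^ 2 := by
    have h2v : 2 * ∑ n ∈ S, p n * (f n - μ) ^ 2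
        = ∑ x ∈ S, ∑ y ∈ S, p x * p y * (f y - f x) ^ 2 := by
      rw [hVar, hDouble]; ring
    nlinarith [step2, hswap]
  have main2 : (L : ℝ) * ∑ n ∈ T, P1 n * P2 n * (f n - f (n - 1)) ^ 2
      ≤ (β * L / α) * ∑ n ∈ T, p n * qdn n * (f n - f (n - 1)) ^ 2 := by
    calc (L : ℝ) * ∑ n ∈ T, P1 n * P2 n * (f n - f (n - 1)) ^ 2
        ≤ (L : ℝ) * ∑ n ∈ T, (β / α * (p n * qdn n)) * (f n - f (n - 1)) ^ 2 := by
          refine mul_le_mul_of_nonneg_left ?_ (Nat.cast_nonneg _)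
          refine Finset.sum_le_sum fun n hn => ?_
          exact mul_le_mul_of_nonneg_right (hedge n hn) (sq_nonneg _)
      _ = (β * L / α) * ∑ n ∈ T, p n * qdn n * (f n - f (n - 1)) ^ 2 := by
          rw [Finset.mul_sum, Finset.mul_sum]
          exact Finset.sum_congr rfl fun n _ => by ring
  exact main1.trans main2
end

section
/- Let a ∈ (0,1/2) and λ > 2/(1-2a). With E(a,λ) defined as F(λ) - a log(λ-1) + q(2a) for λ ∈ (2/(1-2a), λ_c(a)] and q(2a) for λ ≥ λ_c(a), one has E(a,λ) > 0 in both regimes. -/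
lemma entq_pos {d : ℝ} (hd0 : 0 < d) (hd1 : d < 1) : 0 < entq d := by
  have hm1 : (1 - d) ∈ Set.Ici (0:ℝ) := by simp [Set.mem_Ici]; linarith
  have hm2 : (1 + d) ∈ Set.Ici (0:ℝ) := by simp [Set.mem_Ici]; linarith
  have hne : (1 - d) ≠ (1 + d) := by intro h; nlinarith [congrArg id h]
  have hha : (0:ℝ) < 1/2 := by norm_num
  have hab : (1/2 : ℝ) + 1/2 = 1 := by norm_num
  have h := Real.strictConvexOn_mul_log.2 hm1 hm2 hne hha hha hab
  simp only [smul_eq_mul] at h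
  have h1 : (1/2 : ℝ) * (1 - d) + 1/2 * (1 + d) = 1 := by ring
  rw [h1, Real.log_one, mul_zero] at h
  unfold entq
  nlinarith

lemma g_hasDeriv (a x : ℝ) (hx : 2 < x) :
    HasDerivAt (fun x : ℝ => Real.log x - Real.log 2 - (a + 1/2) * Real.log (x - 1))
      (1/x - (a + 1/2) * (1/(x - 1))) x := by
  have hx0 : x ≠ 0 := by linarith
  have hx1 : x - 1 ≠ 0 := by intro h; nlinarith [congrArg id h]
  have h1 : HasDerivAt Real.log (1/x) x := by
    simpa [one_div] using Real.hasDerivAt_log hx0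
  have h2 : HasDerivAt (fun x : ℝ => Real.log (x - 1)) (1/(x-1)) x := by
    have := (Real.hasDerivAt_log hx1).comp x ((hasDerivAt_id x).sub_const 1)
    simpa [one_div, Function.comp_def] using this
  simpa [Pi.sub_def] using (h1.sub_const (Real.log 2)).sub (h2.const_mul (a + 1/2))

lemma g_mono {a : ℝ} (ha1 : 0 < a) (ha2 : a < 1/2) :
    StrictMonoOn (fun x : ℝ => Real.log x - Real.log 2 - (a + 1/2) * Real.log (x - 1))
      (Set.Ici (2 / (1 - 2*a))) := by
  have h12a : 0 < 1 - 2*a := by linarith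
  have hl0 : 2 < 2 / (1 - 2*a) := by rw [lt_div_iff₀ h12a]; nlinarith
  apply strictMonoOn_of_deriv_pos (convex_Ici _)
  · intro x hx
    exact (g_hasDeriv a x (lt_of_lt_of_le hl0 hx)).continuousAt.continuousWithinAt
  · intro x hx
    rw [interior_Ici] at hx
    have hx2 : 2 < x := lt_trans hl0 hx
    rw [(g_hasDeriv a x hx2).deriv]
    have hxm : 2 < x * (1 - 2*a) := by
      rw [Set.mem_Ioi, div_lt_iff₀ h12a] at hx; linarith
    rw [sub_pos]
    have hx1 : (0:ℝ) < x - 1 := by linarith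
    have hx0 : (0:ℝ) < x := by linarith
    rw [mul_one_div, div_lt_div_iff₀ hx1 hx0]
    nlinarith

/-- The activation energy `E(a,λ)` is strictly positive for `λ > 2/(1-2a)`:
it equals `F(λ) - a log(λ-1) + q(2a)` for `λ ∈ (2/(1-2a), λ_c(a)]` and `q(2a)` for
`λ ≥ λ_c(a)`, and is positive in both regimes. -/
theorem activation_energy_pos (a lam lc : ℝ) (ha : a ∈ Set.Ioo (0 : ℝ) (1 / 2))
    (hlam : 2 / (1 - 2 * a) < lam)
    (hlc : 2 < lc) (heq : freeEn lc = a * Real.log (lc - 1)) :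
    0 < entq (2 * a) ∧
      (lam ≤ lc → 0 < freeEn lam - a * Real.log (lam - 1) + entq (2 * a)) := by
  obtain ⟨ha1, ha2⟩ := ha
  have h12a : 0 < 1 - 2*a := by linarith
  have hq : 0 < entq (2 * a) := entq_pos (by linarith) (by linarith)
  refine ⟨hq, fun _ => ?_⟩
  have hl0 : 2 < 2 / (1 - 2*a) := by rw [lt_div_iff₀ h12a]; nlinarith
  have hlam2 : 2 < lam := by linarith
  have hlam1 : (0:ℝ) < lam - 1 := by linarith
  -- rewrite freeEn lam
  have hfree : freeEn lam = Real.log lam - Real.log 2 - (1/2) * Real.log (lam - 1) := by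
    unfold freeEn
    rw [Real.log_div (by linarith) (by positivity),
      Real.log_mul (by norm_num) (by positivity),
      Real.log_sqrt (by linarith)]
    ring
  -- value at the left endpoint
  have hval : Real.log (2 / (1 - 2*a)) - Real.log 2
      - (a + 1/2) * Real.log (2 / (1 - 2*a) - 1) = -(entq (2*a)) := by
    have h1 : 2 / (1 - 2*a) - 1 = (1 + 2*a) / (1 - 2*a) := by
      field_simp; ring
    rw [h1, Real.log_div (by norm_num) (by linarith),
      Real.log_div (by linarith) (by linarith)]
    unfold entq
    ring
  have hmono := g_mono ha1 ha2 (Set.self_mem_Ici) (Set.mem_Ici_of_Ioi hlam) hlam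
  simp only at hmono
  rw [hval] at hmono
  rw [hfree]
  linarith
end
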